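/- Let W : GL(n,ℚ_p) → ℂ satisfy (i) W(ug) = ψ(u)·W(g) for all u ∈ N_n and all g ∈ GL(n,ℚ_p), and (ii) W(gj) = ψ_m(j)·W(g) for all j ∈ J_m and all g ∈ GL(n,ℚ_p). If h ∈ GL(n−1,ℚ_p) and W(diag(h,1)) ≠ 0, then the last row of h satisfies: h_{n−1,i} ∈ p^{(2n−1−2i)m} ℤ_p for every 1 ≤ i ≤ n−2, and h_{n−1,n−1} ∈ 1 + p^m ℤ_p. -/
import Mathlib


open Matrix MeasureTheory

noncomputable section

/-- The subgroup (as a set) of upper triangular unipotent matrices in `GL n`. -/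
def NN (p n : ℕ) [Fact p.Prime] : Set (GL (Fin n) ℚ_[p]) :=
  {g | (∀ i, g.val i i = 1) ∧ ∀ i j : Fin n, j < i → g.val i j = 0}

/-- Lower triangular unipotent matrices in `GL n`. -/
def NNbar (p n : ℕ) [Fact p.Prime] : Set (GL (Fin n) ℚ_[p]) :=
  {g | (∀ i, g.val i i = 1) ∧ ∀ i j : Fin n, i < j → g.val i j = 0}

/-- Invertible diagonal matrices in `GL n`. -/
def AA (p n : ℕ) [Fact p.Prime] : Set (GL (Fin n) ℚ_[p]) :=
  {g | ∀ i j : Fin n, i ≠ j → g.val i j = 0}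

/-- Invertible lower triangular matrices in `GL n`. -/
def BBbar (p n : ℕ) [Fact p.Prime] : Set (GL (Fin n) ℚ_[p]) :=
  {g | ∀ i j : Fin n, i < j → g.val i j = 0}

/-- The congruence subgroup `K_n^m`: matrices `g` with all entries of `g - I` in `p^m ℤ_p`. -/
def Kcong (p n m : ℕ) [Fact p.Prime] : Set (GL (Fin n) ℚ_[p]) :=
  {g | ∀ i j : Fin n, ‖g.val i j - (1 : Matrix (Fin n) (Fin n) ℚ_[p]) i j‖ ≤ (p : ℝ) ^ (-(m : ℤ))}

/-- The diagonal matrix `d = diag(1, p², p⁴, …, p^{2n-2})` as an element of `GL n`. -/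
def dmat (p n : ℕ) [Fact p.Prime] : GL (Fin n) ℚ_[p] :=
  Matrix.GeneralLinearGroup.mkOfDetNeZero
    (Matrix.diagonal fun i : Fin n => (p : ℚ_[p]) ^ (2 * (i : ℕ)))
    (by
      rw [Matrix.det_diagonal]
      exact Finset.prod_ne_zero_iff.mpr fun i _ =>
        pow_ne_zero _ (Nat.cast_ne_zero.mpr (Fact.out : p.Prime).ne_zero))

/-- The compact open subgroup `J_m = d^m K_n^m d^{-m}`. -/
def Jm (p n m : ℕ) [Fact p.Prime] : Set (GL (Fin n) ℚ_[p]) :=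
  {g | ∃ k ∈ Kcong p n m, g = (dmat p n) ^ m * k * ((dmat p n) ^ m)⁻¹}

/-- The sum of the superdiagonal entries `Σ_{i=1}^{n-1} g_{i,i+1}` of a matrix. -/
def superSum {p : ℕ} [Fact p.Prime] {n : ℕ} (g : Matrix (Fin n) (Fin n) ℚ_[p]) : ℚ_[p] :=
  ∑ i : Fin n, if h : (i : ℕ) + 1 < n then g i ⟨(i : ℕ) + 1, h⟩ else 0

/-- The monoid homomorphism `A ↦ diag(A, 1)` from `n×n` matrices to `(n+1)×(n+1)` matrices. -/
def embedHom (p n : ℕ) [Fact p.Prime] :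
    Matrix (Fin n) (Fin n) ℚ_[p] →* Matrix (Fin (n + 1)) (Fin (n + 1)) ℚ_[p] where
  toFun A := (Matrix.reindexAlgEquiv ℚ_[p] ℚ_[p] finSumFinEquiv)
    (Matrix.fromBlocks A 0 0 (1 : Matrix (Fin 1) (Fin 1) ℚ_[p]))
  map_one' := by
    show (Matrix.reindexAlgEquiv ℚ_[p] ℚ_[p] finSumFinEquiv) _ = 1
    rw [Matrix.fromBlocks_one, _root_.map_one]
  map_mul' A B := by
    show (Matrix.reindexAlgEquiv ℚ_[p] ℚ_[p] finSumFinEquiv) _ =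
      (Matrix.reindexAlgEquiv ℚ_[p] ℚ_[p] finSumFinEquiv) _ *
        (Matrix.reindexAlgEquiv ℚ_[p] ℚ_[p] finSumFinEquiv) _
    rw [← _root_.map_mul]
    congr 1
    rw [Matrix.fromBlocks_multiply]
    simp

/-- The embedding `h ↦ diag(h, 1)` of `GL n` into `GL (n+1)`. -/
def embedGL {p n : ℕ} [Fact p.Prime] (g : GL (Fin n) ℚ_[p]) : GL (Fin (n + 1)) ℚ_[p] :=
  Units.map (embedHom p n) g



namespace Stmt2Aux


variable {p : ℕ} [Fact p.Prime] {n : ℕ}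

def colMat (v : Fin (n + 1) → ℚ_[p]) : Matrix (Fin (n + 1)) (Fin (n + 1)) ℚ_[p] :=
  Matrix.of fun k l => if l = Fin.last n then v k else 0

lemma colMat_apply (v : Fin (n + 1) → ℚ_[p]) (k l) :
    colMat v k l = if l = Fin.last n then v k else 0 := rfl

lemma colMat_add (v w : Fin (n + 1) → ℚ_[p]) :
    colMat v + colMat w = colMat (v + w) := by
  ext a b
  simp only [Matrix.add_apply, colMat_apply, Pi.add_apply]
  split <;> simp

lemma colMat_zero : colMat (0 : Fin (n + 1) → ℚ_[p]) = 0 := by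
  ext a b
  simp [colMat_apply]

lemma mul_colMat (M : Matrix (Fin (n + 1)) (Fin (n + 1)) ℚ_[p]) (v : Fin (n + 1) → ℚ_[p]) :
    M * colMat v = colMat (M *ᵥ v) := by
  ext a b
  by_cases hb : b = Fin.last n
  · subst hb
    simp [Matrix.mul_apply, colMat_apply, Matrix.mulVec, dotProduct]
  · simp [Matrix.mul_apply, colMat_apply, hb]

lemma colMat_mul_colMat (v w : Fin (n + 1) → ℚ_[p]) (hw : w (Fin.last n) = 0) :
    colMat v * colMat w = 0 := by
  ext a b
  rw [Matrix.mul_apply]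
  rw [Finset.sum_eq_zero]
  · rfl
  intro k _
  rw [colMat_apply, colMat_apply]
  by_cases hk : k = Fin.last n
  · subst hk
    by_cases hb : b = Fin.last n <;> simp [hb, hw]
  · simp [hk]

lemma one_add_colMat_mul (v w : Fin (n + 1) → ℚ_[p]) (hw : w (Fin.last n) = 0) :
    (1 + colMat v) * (1 + colMat w) = 1 + colMat (v + w) := by
  rw [mul_add, mul_one, add_mul, one_mul, colMat_mul_colMat v w hw, add_zero,
    add_assoc, colMat_add]

/-- The unit `1 + colMat v` of `GL (Fin (n+1)) ℚ_[p]`, for `v` vanishing at the last entry. -/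
def Uu (v : Fin (n + 1) → ℚ_[p]) (hv : v (Fin.last n) = 0) : GL (Fin (n + 1)) ℚ_[p] :=
  ⟨1 + colMat v, 1 + colMat (-v),
    by rw [one_add_colMat_mul v (-v) (by simp [hv])]; simp [colMat_zero],
    by rw [one_add_colMat_mul (-v) v hv]; simp [colMat_zero]⟩

lemma Uu_val (v : Fin (n + 1) → ℚ_[p]) (hv : v (Fin.last n) = 0) :
    (Uu v hv).val = 1 + colMat v := rfl


lemma Uu_mem_NN (v : Fin (n + 1) → ℚ_[p]) (hv : v (Fin.last n) = 0) :
    Uu v hv ∈ NN p (n + 1) := by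
  constructor
  · intro i
    show (1 + colMat v) i i = 1
    by_cases hi : i = Fin.last n
    · subst hi
      simp [Matrix.add_apply, colMat_apply, hv]
    · simp [Matrix.add_apply, colMat_apply, hi]
  · intro i j hij
    show (1 + colMat v) i j = 0
    have hj : j ≠ Fin.last n := by
      intro hj
      exact absurd hij (by subst hj; exact not_lt.2 (Fin.le_last i))
    simp [Matrix.add_apply, colMat_apply, hj, Matrix.one_apply, hij.ne']

lemma superSum_one_add_colMat (hn : 0 < n) (v : Fin (n + 1) → ℚ_[p]) :
    superSum ((1 : Matrix (Fin (n+1)) (Fin (n+1)) ℚ_[p]) + colMat v) = v ⟨n - 1, by omega⟩ := by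
  unfold superSum
  rw [Finset.sum_eq_single (⟨n - 1, by omega⟩ : Fin (n + 1))]
  · rw [dif_pos (by simp; omega)]
    have hne : (⟨n - 1, by omega⟩ : Fin (n + 1)) ≠ ⟨(n-1) + 1, by simp; omega⟩ := by
      simp [Fin.ext_iff]
    have hlast : (⟨(n-1) + 1, by simp; omega⟩ : Fin (n + 1)) = Fin.last n := by
      simp [Fin.ext_iff]; omega
    rw [Matrix.add_apply, Matrix.one_apply_ne hne, colMat_apply, if_pos hlast, zero_add]
  · intro b _ hb
    by_cases hb1 : (b : ℕ) + 1 < n + 1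
    · rw [dif_pos hb1]
      have hne : b ≠ (⟨(b:ℕ) + 1, hb1⟩ : Fin (n+1)) := by simp [Fin.ext_iff]
      have hnl : (⟨(b:ℕ) + 1, hb1⟩ : Fin (n+1)) ≠ Fin.last n := by
        intro hc
        have hbv := congrArg Fin.val hc
        simp only [Fin.val_last] at hbv
        exact hb (Fin.ext (show (b:ℕ) = n - 1 by omega))
      rw [Matrix.add_apply, Matrix.one_apply_ne hne, colMat_apply, if_neg hnl, zero_add]
    · rw [dif_neg hb1]
  · simp


lemma embed_val_castSucc (g : GL (Fin n) ℚ_[p]) (k l : Fin n) :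
    (embedGL g).val (Fin.castSucc k) (Fin.castSucc l) = g.val k l := by
  show (embedHom p n g.val) _ _ = _
  simp only [embedHom, MonoidHom.coe_mk, OneHom.coe_mk, Matrix.reindexAlgEquiv_apply,
    Matrix.reindex_apply, Matrix.submatrix_apply]
  rw [show Fin.castSucc k = Fin.castAdd 1 k from rfl,
    show Fin.castSucc l = Fin.castAdd 1 l from rfl,
    finSumFinEquiv_symm_apply_castAdd, finSumFinEquiv_symm_apply_castAdd]
  rfl

lemma embed_val_last_row (g : GL (Fin n) ℚ_[p]) (b : Fin (n + 1)) :
    (embedGL g).val (Fin.last n) b = if b = Fin.last n then 1 else 0 := by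
  show (embedHom p n g.val) _ _ = _
  have hlast : Fin.last n = Fin.natAdd n (0 : Fin 1) := by ext; simp
  simp only [embedHom, MonoidHom.coe_mk, OneHom.coe_mk, Matrix.reindexAlgEquiv_apply,
    Matrix.reindex_apply, Matrix.submatrix_apply]
  rcases Fin.eq_castSucc_or_eq_last b with ⟨j, rfl⟩ | rfl
  · rw [if_neg (Fin.castSucc_lt_last j).ne, hlast,
      show Fin.castSucc j = Fin.castAdd 1 j from rfl,
      finSumFinEquiv_symm_apply_natAdd, finSumFinEquiv_symm_apply_castAdd]
    rfl
  · rw [if_pos rfl, hlast, finSumFinEquiv_symm_apply_natAdd]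
    rfl

lemma dmat_val : (dmat p (n + 1)).val
    = Matrix.diagonal (fun i : Fin (n + 1) => (p : ℚ_[p]) ^ (2 * (i : ℕ))) := rfl

lemma dmat_pow_val (m : ℕ) : ((dmat p (n + 1)) ^ m).val
    = Matrix.diagonal (fun i : Fin (n + 1) => (p : ℚ_[p]) ^ (2 * (i : ℕ) * m)) := by
  rw [Units.val_pow_eq_pow_val, dmat_val, Matrix.diagonal_pow]
  have hf : ((fun i : Fin (n + 1) => (p : ℚ_[p]) ^ (2 * (i : ℕ))) ^ m)
      = fun i : Fin (n + 1) => (p : ℚ_[p]) ^ (2 * (i : ℕ) * m) := by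
    funext i
    rw [Pi.pow_apply, ← pow_mul]
  rw [hf]


lemma colMat_mul_apply (u : Fin (n + 1) → ℚ_[p]) (M : Matrix (Fin (n + 1)) (Fin (n + 1)) ℚ_[p])
    (a b : Fin (n + 1)) : (colMat u * M) a b = u a * M (Fin.last n) b := by
  rw [Matrix.mul_apply]
  refine (Finset.sum_eq_single_of_mem (Fin.last n) (Finset.mem_univ _) ?_).trans ?_
  · intro k _ hk
    show colMat u a k * M k b = 0
    rw [colMat_apply, if_neg hk, zero_mul]
  · show colMat u a (Fin.last n) * M (Fin.last n) b = _
    rw [colMat_apply, if_pos rfl]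

lemma mul_one_add_colMat (g : Matrix (Fin (n + 1)) (Fin (n + 1)) ℚ_[p])
    (hg : ∀ b, g (Fin.last n) b = if b = Fin.last n then 1 else 0)
    (v : Fin (n + 1) → ℚ_[p]) :
    g * (1 + colMat v) = (1 + colMat (g *ᵥ v)) * g := by
  rw [mul_add, mul_one, add_mul, one_mul, mul_colMat]
  congr 1
  ext a b
  rw [colMat_mul_apply, hg, colMat_apply]
  split_ifs <;> simp

lemma one_add_colMat_mul_diagonal (m : ℕ) (i : Fin n) (c : ℚ_[p]) :
    (1 + colMat (fun k => if k = Fin.castSucc i then c else 0)) *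
      Matrix.diagonal (fun k : Fin (n + 1) => (p : ℚ_[p]) ^ (2 * (k : ℕ) * m))
    = Matrix.diagonal (fun k : Fin (n + 1) => (p : ℚ_[p]) ^ (2 * (k : ℕ) * m)) *
      (1 + colMat (fun k => if k = Fin.castSucc i
          then c * (p : ℚ_[p]) ^ (2 * (n - (i : ℕ)) * m) else 0)) := by
  have hli : Fin.last n ≠ Fin.castSucc i := (Fin.castSucc_lt_last i).ne'
  ext a b
  rw [Matrix.mul_diagonal, Matrix.diagonal_mul]
  simp only [Matrix.add_apply, colMat_apply, Matrix.one_apply]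
  by_cases hb : b = Fin.last n
  · subst hb
    by_cases ha : a = Fin.last n
    · subst ha
      simp [hli]
    · by_cases hai : a = Fin.castSucc i
      · subst hai
        simp only [if_pos rfl, if_neg ha, zero_add, Fin.val_last, Fin.coe_castSucc]
        have h2 : 2 * (i : ℕ) * m + 2 * (n - (i : ℕ)) * m = 2 * n * m := by
          rw [← add_mul]
          have h3 : 2 * (i : ℕ) + 2 * (n - (i : ℕ)) = 2 * n := by
            have := i.isLt; omega
          rw [h3]
        calc c * (p : ℚ_[p]) ^ (2 * n * m)
            = c * ((p : ℚ_[p]) ^ (2 * (i : ℕ) * m) * (p : ℚ_[p]) ^ (2 * (n - (i : ℕ)) * m)) := by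
              rw [← pow_add, h2]
          _ = (p : ℚ_[p]) ^ (2 * (i : ℕ) * m) * (c * (p : ℚ_[p]) ^ (2 * (n - (i : ℕ)) * m)) := by
              ring
      · simp [ha, hai]
  · by_cases hab : a = b
    · subst hab
      simp [hb]
    · simp [hab, hb]

lemma addChar_ne_zero (ψ : AddChar ℚ_[p] ℂ) (a : ℚ_[p]) : ψ a ≠ 0 := by
  have h1 : ψ a * ψ (-a) = 1 := by
    rw [← AddChar.map_add_eq_mul, add_neg_cancel, AddChar.map_zero_eq_one]
  exact left_ne_zero_of_mul_eq_one h1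

lemma addChar_sub_eq_one (ψ : AddChar ℚ_[p] ℂ) {a b : ℚ_[p]} (hab : ψ a = ψ b) :
    ψ (a - b) = 1 := by
  have h1 : ψ (a - b) * ψ b = ψ b := by
    rw [← AddChar.map_add_eq_mul, sub_add_cancel, hab]
  have := addChar_ne_zero ψ b
  field_simp at h1
  exact h1

lemma norm_le_of_char (ψ : AddChar ℚ_[p] ℂ)
    (hψnontriv : ∃ x : ℚ_[p], ‖x‖ ≤ (p : ℝ) ∧ ψ x ≠ 1)
    (x : ℚ_[p]) (e : ℤ) (hx : ∀ t : ℚ_[p], ‖t‖ ≤ (p : ℝ) ^ e → ψ (t * x) = 1) :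
    ‖x‖ ≤ (p : ℝ) ^ (-e) := by
  have hp1 : (1 : ℝ) < (p : ℝ) := by
    exact_mod_cast (Fact.out : p.Prime).one_lt
  rcases eq_or_ne x 0 with rfl | hx0
  · simp only [norm_zero]
    positivity
  by_contra hgt
  push_neg at hgt
  obtain ⟨x₀, hx₀n, hx₀⟩ := hψnontriv
  apply hx₀
  have hxval : ‖x‖ = (p : ℝ) ^ (-x.valuation) := Padic.norm_eq_zpow_neg_valuation hx0
  have hvlt : x.valuation < e := by
    rw [hxval] at hgt
    have := (zpow_lt_zpow_iff_right₀ hp1).mp hgt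
    omega
  have key : ‖x₀ / x‖ ≤ (p : ℝ) ^ e := by
    rw [norm_div, hxval, div_le_iff₀ (by positivity)]
    calc ‖x₀‖ ≤ (p : ℝ) := hx₀n
      _ = (p : ℝ) ^ (1 : ℤ) := (zpow_one _).symm
      _ ≤ (p : ℝ) ^ (e - x.valuation) := zpow_le_zpow_right₀ hp1.le (by omega)
      _ = (p : ℝ) ^ e * (p : ℝ) ^ (-x.valuation) := by
          rw [← zpow_add₀ (by positivity : (p:ℝ) ≠ 0), ← sub_eq_add_neg]
  have := hx (x₀ / x) key
  rwa [div_mul_cancel₀ _ hx0] at this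

end Stmt2Aux

/-- If `W` transforms on the left under `(N_{n+1}, ψ)` and on the right under
`(J_m, ψ_m)`, and `W(diag(h,1)) ≠ 0` for `h ∈ GL(n, ℚ_p)`, then the last row of `h` satisfies
`h_{n,j} ∈ p^{(2n-1-2j)m} ℤ_p` (`1 ≤ j ≤ n-1`, one-indexed) and `h_{n,n} ∈ 1 + p^m ℤ_p`. -/
theorem statement2 (p n m : ℕ) [Fact p.Prime] (hn : 1 ≤ n) (hm : 1 ≤ m)
    (ψ : AddChar ℚ_[p] ℂ)
    (hψtriv : ∀ x : ℚ_[p], ‖x‖ ≤ 1 → ψ x = 1)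
    (hψnontriv : ∃ x : ℚ_[p], ‖x‖ ≤ (p : ℝ) ∧ ψ x ≠ 1)
    (W : GL (Fin (n + 1)) ℚ_[p] → ℂ)
    (hW1 : ∀ u ∈ NN p (n + 1), ∀ g : GL (Fin (n + 1)) ℚ_[p],
      W (u * g) = ψ (superSum u.val) * W g)
    (hW2 : ∀ g : GL (Fin (n + 1)) ℚ_[p],
      ∀ b ∈ BBbar p (n + 1) ∩ Jm p (n + 1) m, ∀ u ∈ NN p (n + 1) ∩ Jm p (n + 1) m,
        W (g * (b * u)) = ψ (superSum u.val) * W g)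
    (h : GL (Fin n) ℚ_[p]) (hne : W (embedGL h) ≠ 0) :
    (∀ j : Fin n, (j : ℕ) < n - 1 →
      ‖h.val ⟨n - 1, by omega⟩ j‖ ≤ (p : ℝ) ^ (-((2 * (n : ℤ) - 1 - 2 * (j : ℕ)) * m))) ∧
    ‖h.val ⟨n - 1, by omega⟩ ⟨n - 1, by omega⟩ - 1‖ ≤ (p : ℝ) ^ (-(m : ℤ)) := by
  classical
  open Stmt2Aux in
  have hn' : n - 1 < n := by omega
  have key : ∀ (i : Fin n) (c : ℚ_[p]),
      ‖c‖ ≤ (p : ℝ) ^ (((2 * (n - (i : ℕ)) - 1) * m : ℕ) : ℤ) →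
      ψ (c * h.val ⟨n - 1, hn'⟩ i) = ψ (if (i : ℕ) = n - 1 then c else 0) := by
    intro i c hc
    have hi : (i : ℕ) < n := i.isLt
    have hcsl : Fin.castSucc i ≠ Fin.last n := (Fin.castSucc_lt_last i).ne
    set v : Fin (n + 1) → ℚ_[p] := fun k => if k = Fin.castSucc i then c else 0 with hvdef
    have hv : v (Fin.last n) = 0 := if_neg (Fin.castSucc_lt_last i).ne'
    set w : Fin (n + 1) → ℚ_[p] :=
      fun k => if k = Fin.castSucc i
        then c * (p : ℚ_[p]) ^ (2 * (n - (i : ℕ)) * m) else 0 with hwdef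
    have hw : w (Fin.last n) = 0 := if_neg (Fin.castSucc_lt_last i).ne'
    have hvapp : ∀ j, v j = if j = Fin.castSucc i then c else 0 := fun _ => rfl
    have hwapp : ∀ j, w j = if j = Fin.castSucc i
        then c * (p : ℚ_[p]) ^ (2 * (n - (i : ℕ)) * m) else 0 := fun _ => rfl
    have hp0 : (0 : ℝ) < (p : ℝ) := by exact_mod_cast (Fact.out : p.Prime).pos
    set u : GL (Fin (n + 1)) ℚ_[p] := Uu v hv with hu
    set k : GL (Fin (n + 1)) ℚ_[p] := Uu w hw with hk
    have hkK : k ∈ Kcong p (n + 1) m := by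
      simp only [Kcong, Set.mem_setOf_eq]
      intro a b
      have hsub : k.val a b - (1 : Matrix (Fin (n+1)) (Fin (n+1)) ℚ_[p]) a b
          = colMat w a b := by
        rw [hk, Uu_val, Matrix.add_apply]; ring
      rw [hsub, colMat_apply]
      by_cases hb : b = Fin.last n
      · rw [if_pos hb]
        by_cases hai : a = Fin.castSucc i
        · subst hai
          rw [hwapp, if_pos rfl, norm_mul, Padic.norm_p_pow]
          have hle : (((2 * (n - (i:ℕ)) - 1) * m : ℕ) : ℤ) + (-(2 * (n - (i:ℕ)) * m : ℕ) : ℤ)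
              = -(m : ℤ) := by
            obtain ⟨a, ha⟩ : ∃ a, 2 * (n - (i:ℕ)) = a + 1 :=
              ⟨2 * (n - (i:ℕ)) - 1, by omega⟩
            rw [ha]
            simp only [Nat.add_sub_cancel]
            push_cast
            ring
          calc ‖c‖ * (p : ℝ) ^ (-(2 * (n - (i:ℕ)) * m : ℕ) : ℤ)
              ≤ (p : ℝ) ^ (((2 * (n - (i:ℕ)) - 1) * m : ℕ) : ℤ)
                  * (p : ℝ) ^ (-(2 * (n - (i:ℕ)) * m : ℕ) : ℤ) := by
                exact mul_le_mul_of_nonneg_right hc (zpow_nonneg hp0.le _)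
            _ = (p : ℝ) ^ (-(m : ℤ)) := by
                rw [← zpow_add₀ hp0.ne', hle]
        · rw [hwapp, if_neg hai, norm_zero]
          exact zpow_nonneg hp0.le _
      · rw [if_neg hb]
        rw [norm_zero]
        exact zpow_nonneg hp0.le _
    have huJ : u ∈ Jm p (n + 1) m := by
      refine ⟨k, hkK, ?_⟩
      rw [eq_mul_inv_iff_mul_eq]
      apply Units.ext
      show u.val * ((dmat p (n + 1)) ^ m).val = ((dmat p (n + 1)) ^ m).val * k.val
      rw [dmat_pow_val, hu, hk, Uu_val, Uu_val]
      exact one_add_colMat_mul_diagonal m i c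
    have huN : u ∈ NN p (n + 1) := Uu_mem_NN v hv
    have h1J : (1 : GL (Fin (n + 1)) ℚ_[p]) ∈ Jm p (n + 1) m := by
      refine ⟨1, ?_, by group⟩
      simp only [Kcong, Set.mem_setOf_eq]
      intro a b
      simp only [Units.val_one, sub_self, norm_zero]
      exact zpow_nonneg hp0.le _
    have h1B : (1 : GL (Fin (n + 1)) ℚ_[p]) ∈ BBbar p (n + 1) := by
      simp only [BBbar, Set.mem_setOf_eq]
      intro a b hab
      exact Matrix.one_apply_ne hab.ne
    have eq1 : W (embedGL h * u) = ψ (superSum u.val) * W (embedGL h) := by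
      have := hW2 (embedGL h) 1 ⟨h1B, h1J⟩ u ⟨huN, huJ⟩
      rwa [one_mul] at this
    set v' : Fin (n + 1) → ℚ_[p] := (embedGL h).val *ᵥ v with hv'def
    have hv' : v' (Fin.last n) = 0 := by
      rw [hv'def]
      show ∑ j, (embedGL h).val (Fin.last n) j * v j = 0
      apply Finset.sum_eq_zero
      intro j _
      rw [embed_val_last_row]
      by_cases hj : j = Fin.last n
      · subst hj; rw [if_pos rfl, one_mul, hv]
      · rw [if_neg hj, zero_mul]
    set u' : GL (Fin (n + 1)) ℚ_[p] := Uu v' hv' with hu'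
    have hcomm : embedGL h * u = u' * embedGL h := by
      apply Units.ext
      show (embedGL h).val * u.val = u'.val * (embedGL h).val
      rw [hu, hu', Uu_val, Uu_val, hv'def]
      exact mul_one_add_colMat (embedGL h).val (embed_val_last_row h) v
    have eq2 : W (u' * embedGL h) = ψ (superSum u'.val) * W (embedGL h) :=
      hW1 u' (Uu_mem_NN v' hv') (embedGL h)
    have hs1 : superSum u.val = (if (i : ℕ) = n - 1 then c else 0) := by
      rw [hu, Uu_val, superSum_one_add_colMat (by omega : 0 < n) v, hvapp]
      have hiff : ((⟨n - 1, by omega⟩ : Fin (n + 1)) = Fin.castSucc i) ↔ ((i : ℕ) = n - 1) := by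
        rw [show Fin.castSucc i = (⟨(i : ℕ), by omega⟩ : Fin (n + 1)) from rfl, Fin.mk.injEq]
        omega
      rw [if_congr hiff rfl rfl]
    have hs2 : superSum u'.val = c * h.val ⟨n - 1, hn'⟩ i := by
      rw [hu', Uu_val, superSum_one_add_colMat (by omega : 0 < n) v', hv'def]
      show ∑ j, (embedGL h).val ⟨n - 1, by omega⟩ j * v j = _
      rw [Finset.sum_eq_single_of_mem (Fin.castSucc i) (Finset.mem_univ _)
        (fun j _ hj => by rw [hvapp, if_neg hj, mul_zero])]
      rw [hvapp, if_pos rfl]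
      have hcast : (⟨n - 1, by omega⟩ : Fin (n + 1)) = Fin.castSucc ⟨n - 1, hn'⟩ :=
        Fin.ext rfl
      rw [hcast, embed_val_castSucc, mul_comm]
    have hWeq : ψ (superSum u'.val) * W (embedGL h) = ψ (superSum u.val) * W (embedGL h) := by
      rw [← eq2, ← hcomm, eq1]
    have heq := mul_right_cancel₀ hne hWeq
    rw [hs1, hs2] at heq
    exact heq
  constructor
  · intro j hj
    have hjn : (j : ℕ) < n := j.isLt
    have hchar : ∀ t : ℚ_[p],
        ‖t‖ ≤ (p : ℝ) ^ (((2 * (n - (j : ℕ)) - 1) * m : ℕ) : ℤ) →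
        ψ (t * h.val ⟨n - 1, by omega⟩ j) = 1 := by
      intro t ht
      have hk := key j t ht
      rwa [if_neg (by omega), AddChar.map_zero_eq_one] at hk
    have hres := Stmt2Aux.norm_le_of_char ψ hψnontriv _ _ hchar
    have hE : (-(((2 * (n - (j : ℕ)) - 1) * m : ℕ) : ℤ))
        = -((2 * (n : ℤ) - 1 - 2 * (j : ℕ)) * m) := by
      obtain ⟨a, ha⟩ : ∃ a, n - (j : ℕ) = a + 1 := ⟨n - (j:ℕ) - 1, by omega⟩
      have hn2 : (n : ℤ) = (a : ℤ) + 1 + (j : ℕ) := by omega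
      rw [ha, hn2]
      have h3 : 2 * (a + 1) - 1 = 2 * a + 1 := by omega
      rw [h3]
      push_cast
      ring
    rwa [hE] at hres
  · have harith : (2 * (n - (n - 1)) - 1) * m = m := by
      have h1 : 2 * (n - (n - 1)) - 1 = 1 := by omega
      rw [h1, one_mul]
    have hchar : ∀ t : ℚ_[p], ‖t‖ ≤ (p : ℝ) ^ (m : ℤ) →
        ψ (t * (h.val ⟨n - 1, by omega⟩ ⟨n - 1, by omega⟩ - 1)) = 1 := by
      intro t ht
      have hk := key ⟨n - 1, by omega⟩ t (by
        show ‖t‖ ≤ (p : ℝ) ^ (((2 * (n - (n - 1)) - 1) * m : ℕ) : ℤ)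
        rwa [harith])
      rw [if_pos rfl] at hk
      have hsub := Stmt2Aux.addChar_sub_eq_one ψ hk
      rwa [show t * h.val ⟨n - 1, hn'⟩ ⟨n - 1, by omega⟩ - t
          = t * (h.val ⟨n - 1, by omega⟩ ⟨n - 1, by omega⟩ - 1) by ring] at hsub
    exact Stmt2Aux.norm_le_of_char ψ hψnontriv _ _ hchar

end
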